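/- Let G = GL_{2n}, θ an involution with H = G^θ = Sp_{2n}, and T a θ-stable maximal torus. Let x ∈ G^{ιθ} with Jordan decomposition x = x_s x_u. Then x_s and x_u both lie in G^{ιθ}, L_0 = Z_G(x_s) is a θ-stable Levi subgroup of a (not necessarily θ-stable) parabolic subgroup, x_s ∈ Z(L_0)^{ιθ}, and x_u ∈ (L_0)^{ιθ}_uni. -/

import Mathlib

open Matrix

noncomputable section

def zarTop (k : Type*) [CommRing k] (σ : Type*) : TopologicalSpace (σ → k) :=
  TopologicalSpace.generateFrom
    {U | ∃ f : MvPolynomial σ k, U = {x | MvPolynomial.eval x f ≠ 0}}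

def vdim {k : Type*} [CommRing k] {σ : Type*} (S : Set (σ → k)) : WithBot ℕ∞ :=
  @topologicalKrullDim S (TopologicalSpace.induced Subtype.val (zarTop k σ))

def mEmb {k : Type*} {n : ℕ} (M : Matrix (Fin n) (Fin n) k) : (Fin n × Fin n) → k :=
  fun p => M p.1 p.2

def mdim {k : Type*} [CommRing k] {n : ℕ} (S : Set (Matrix (Fin n) (Fin n) k)) : WithBot ℕ∞ :=
  vdim (mEmb '' S)

def pEmb {k : Type*} {n : ℕ} (p : Matrix (Fin n) (Fin n) k × (Fin n → k)) :
    ((Fin n × Fin n) ⊕ Fin n) → k :=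
  Sum.elim (mEmb p.1) p.2

def pdim {k : Type*} [CommRing k] {n : ℕ} (S : Set (Matrix (Fin n) (Fin n) k × (Fin n → k))) :
    WithBot ℕ∞ :=
  vdim (pEmb '' S)

def Bor (k : Type*) [CommRing k] (n : ℕ) : Set (Matrix (Fin n) (Fin n) k) :=
  {b | IsUnit b ∧ ∀ i j : Fin n, (j : ℕ) < (i : ℕ) → b i j = 0}

def Uni (k : Type*) [Zero k] [One k] (n : ℕ) : Set (Matrix (Fin n) (Fin n) k) :=
  {u | (∀ i j : Fin n, (j : ℕ) < (i : ℕ) → u i j = 0) ∧ ∀ i : Fin n, u i i = 1}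

def Mset (k : Type*) [Zero k] (n m : ℕ) : Set (Fin n → k) :=
  {v | ∀ i : Fin n, m ≤ (i : ℕ) → v i = 0}

/-- The matrix of the symplectic form: `⟨e_i, f_i⟩ = 1` for the basis
`e_0, …, e_{n-1}, f_{n-1}, …, f_0` of `k^{2n}`. -/
def Jmat (k : Type*) [CommRing k] (n : ℕ) : Matrix (Fin (2 * n)) (Fin (2 * n)) k :=
  Matrix.of fun i j =>
    if (i : ℕ) + (j : ℕ) = 2 * n - 1 then (if (i : ℕ) < n then 1 else -1) else 0

/-- The involution `θ(g) = J (gᵀ)⁻¹ J⁻¹` on `G = GL_{2n}`, with `G^θ = Sp_{2n}`. -/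
def thetaMap (k : Type*) [Field k] (n : ℕ) (x : Matrix (Fin (2 * n)) (Fin (2 * n)) k) :
    Matrix (Fin (2 * n)) (Fin (2 * n)) k :=
  Jmat k n * (x⁻¹)ᵀ * (Jmat k n)⁻¹

/-- `H = G^θ ≅ Sp_{2n}`. -/
def Hsp (k : Type*) [Field k] (n : ℕ) : Set (Matrix (Fin (2 * n)) (Fin (2 * n)) k) :=
  {h | IsUnit h ∧ thetaMap k n h = h}

/-- `G^{ιθ} = {g : θ(g) = g⁻¹}`. -/
def Giota (k : Type*) [Field k] (n : ℕ) : Set (Matrix (Fin (2 * n)) (Fin (2 * n)) k) :=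
  {x | IsUnit x ∧ thetaMap k n x = x⁻¹}

/-- The centralizer `L₀ = Z_G(x_s)`. -/
def Lzero (k : Type*) [Field k] (n : ℕ) (xs : Matrix (Fin (2 * n)) (Fin (2 * n)) k) :
    Set (Matrix (Fin (2 * n)) (Fin (2 * n)) k) :=
  {g | IsUnit g ∧ g * xs = xs * g}

section AuxLemmas

open Polynomial

lemma commute_aeval' {R A : Type*} [CommSemiring R] [Semiring A] [Algebra R A]
    {a b : A} (h : Commute a b) (p : R[X]) : Commute a (aeval b p) := by
  induction p using Polynomial.induction_on' with
  | add p q hp hq => rw [map_add]; exact hp.add_right hq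
  | monomial n r =>
      rw [aeval_monomial]
      exact (Algebra.commute_algebraMap_right r a).mul_right (h.pow_right n)

lemma aeval_diagonal' {K : Type*} [CommRing K] {m : Type*} [Fintype m] [DecidableEq m]
    (v : m → K) (p : K[X]) :
    aeval (Matrix.diagonal v) p = Matrix.diagonal (fun i => p.eval (v i)) := by
  induction p using Polynomial.induction_on' with
  | add p q hp hq =>
      rw [map_add, hp, hq, Matrix.diagonal_add]
      ext i j
      by_cases h : i = j <;> simp [h, Matrix.diagonal]
  | monomial n r =>
      rw [aeval_monomial, Matrix.algebraMap_eq_diagonal, Matrix.diagonal_pow,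
        Matrix.diagonal_mul_diagonal]
      ext i j
      by_cases h : i = j <;> simp [h, Matrix.diagonal]

lemma aeval_units_conj' {R A : Type*} [CommSemiring R] [Ring A] [Algebra R A]
    (g : Aˣ) (a : A) (p : R[X]) :
    aeval ((g : A) * a * (↑g⁻¹ : A)) p = (g : A) * aeval a p * (↑g⁻¹ : A) := by
  induction p using Polynomial.induction_on' with
  | add p q hp hq => rw [map_add, map_add, hp, hq, mul_add, add_mul]
  | monomial n r =>
      rw [aeval_monomial, aeval_monomial, Units.conj_pow]
      simp only [← mul_assoc]
      rw [(Algebra.commute_algebraMap_left r (g : A)).eq]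

lemma isSemisimple_of_conj_diagonal' {K : Type*} [Field K] {m : Type*} [Fintype m] [DecidableEq m]
    (g : (Matrix m m K)ˣ) (v : m → K) :
    Module.End.IsSemisimple (Matrix.toLinAlgEquiv'
      ((g : Matrix m m K) * Matrix.diagonal v * (↑g⁻¹ : Matrix m m K))) := by
  classical
  set p : K[X] := ∏ c ∈ Finset.image v Finset.univ, (X - C c) with hp
  have hsq : Squarefree p := by
    apply Polynomial.Separable.squarefree
    rw [hp]
    exact Polynomial.separable_prod_X_sub_C_iff'.mpr (fun x _ y _ h => h)
  have h0 : aeval ((g : Matrix m m K) * Matrix.diagonal v * (↑g⁻¹ : Matrix m m K)) p = 0 := by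
    rw [aeval_units_conj', aeval_diagonal']
    have hz : ∀ i, p.eval (v i) = 0 := fun i => by
      rw [hp, Polynomial.eval_prod]
      exact Finset.prod_eq_zero (Finset.mem_image_of_mem v (Finset.mem_univ i)) (by simp)
    simp [hz]
  apply Module.End.isSemisimple_of_squarefree_aeval_eq_zero hsq
  have := Polynomial.aeval_algHom_apply (Matrix.toLinAlgEquiv' (n := m) (R := K)).toAlgHom
    ((g : Matrix m m K) * Matrix.diagonal v * (↑g⁻¹ : Matrix m m K)) p
  rw [h0, map_zero] at this
  exact this

lemma jc_unique' {K V : Type*} [Field K] [PerfectField K] [AddCommGroup V] [Module K V]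
    [FiniteDimensional K V] {s n s' n' : Module.End K V}
    (hs : s.IsSemisimple) (hs' : s'.IsSemisimple)
    (hn : IsNilpotent n) (hn' : IsNilpotent n')
    (hc : Commute s n) (hc' : Commute s' n') (h : s + n = s' + n') : s = s' := by
  obtain ⟨N, hNmem, S, hSmem, hNnil, hSss, hsum⟩ :=
    Module.End.exists_isNilpotent_isSemisimple (f := s + n)
  have hmem : ∀ a ∈ Algebra.adjoin K {s + n}, ∀ b : Module.End K V,
      Commute b (s + n) → Commute b a := by
    intro a ha b hb
    rw [Algebra.adjoin_singleton_eq_range_aeval] at ha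
    obtain ⟨q, rfl⟩ := ha
    exact commute_aeval' hb q
  have key : ∀ t u : Module.End K V, t.IsSemisimple → IsNilpotent u → Commute t u →
      t + u = N + S → Commute t (s + n) → Commute u (s + n) → t = S := by
    intro t u hts hun htu hsum2 htf huf
    have h1 : Commute t S := hmem S hSmem t htf
    have h2 : Commute u N := hmem N hNmem u huf
    have hsub : t - S = N - u := by
      calc t - S = (t + u) - u - S := by abel
        _ = (N + S) - u - S := by rw [hsum2]
        _ = N - u := by abel
    have hnilsub : IsNilpotent (t - S) := by
      rw [hsub]; exact (h2.symm).isNilpotent_sub hNnil hun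
    have hsssub : (t - S).IsSemisimple :=
      Module.End.IsSemisimple.sub_of_commute h1 hts hSss
    have := Module.End.eq_zero_of_isNilpotent_isSemisimple hnilsub hsssub
    exact sub_eq_zero.mp this
  have e1 : s = S := key s n hs hn hc hsum
    ((Commute.refl s).add_right hc) ((hc.symm).add_right (Commute.refl n))
  have e2 : s' = S := key s' n' hs' hn' hc' (by rw [← h]; exact hsum)
    (by rw [h]; exact (Commute.refl s').add_right hc')
    (by rw [h]; exact (hc'.symm).add_right (Commute.refl n'))
  rw [e1, e2]

lemma mult_jordan_unique' {K : Type*} [Field K] [PerfectField K] {m : Type*}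
    [Fintype m] [DecidableEq m] {s u s' u' : Matrix m m K}
    (hs : ∃ (g : (Matrix m m K)ˣ) (v : m → K),
      s = (g : Matrix m m K) * Matrix.diagonal v * (↑g⁻¹ : Matrix m m K))
    (hs' : ∃ (g : (Matrix m m K)ˣ) (v : m → K),
      s' = (g : Matrix m m K) * Matrix.diagonal v * (↑g⁻¹ : Matrix m m K))
    (hu : IsNilpotent (u - 1)) (hu' : IsNilpotent (u' - 1))
    (hc : s * u = u * s) (hc' : s' * u' = u' * s')
    (heq : s * u = s' * u') (hsu : IsUnit s') : s = s' ∧ u = u' := by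
  let e := Matrix.toLinAlgEquiv' (n := m) (R := K)
  have hss : Module.End.IsSemisimple (e s) := by
    obtain ⟨g, v, rfl⟩ := hs; exact isSemisimple_of_conj_diagonal' g v
  have hss' : Module.End.IsSemisimple (e s') := by
    obtain ⟨g, v, rfl⟩ := hs'; exact isSemisimple_of_conj_diagonal' g v
  have hd : Commute s (u - 1) := by
    show s * (u - 1) = (u - 1) * s
    rw [mul_sub, sub_mul, hc, mul_one, one_mul]
  have hd' : Commute s' (u' - 1) := by
    show s' * (u' - 1) = (u' - 1) * s'
    rw [mul_sub, sub_mul, hc', mul_one, one_mul]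
  have hnil : IsNilpotent (s * (u - 1)) := hd.isNilpotent_mul_left hu
  have hnil' : IsNilpotent (s' * (u' - 1)) := hd'.isNilpotent_mul_left hu'
  have hkey : s + s * (u - 1) = s * u := by rw [mul_sub, mul_one]; abel
  have hkey' : s' + s' * (u' - 1) = s' * u' := by rw [mul_sub, mul_one]; abel
  have hE : e s + e (s * (u - 1)) = e s' + e (s' * (u' - 1)) := by
    rw [← map_add, ← map_add, hkey, hkey', heq]
  have hmapnil : ∀ A : Matrix m m K, IsNilpotent A → IsNilpotent (e A) := by
    rintro A ⟨r, hr⟩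
    exact ⟨r, by rw [← map_pow, hr, map_zero]⟩
  have hcm : Commute (e s) (e (s * (u - 1))) := by
    show e s * e (s * (u - 1)) = e (s * (u - 1)) * e s
    rw [← _root_.map_mul, ← _root_.map_mul, ((Commute.refl s).mul_right hd).eq]
  have hcm' : Commute (e s') (e (s' * (u' - 1))) := by
    show e s' * e (s' * (u' - 1)) = e (s' * (u' - 1)) * e s'
    rw [← _root_.map_mul, ← _root_.map_mul, ((Commute.refl s').mul_right hd').eq]
  have hseq : e s = e s' :=
    jc_unique' hss hss' (hmapnil _ hnil) (hmapnil _ hnil') hcm hcm' hE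
  have hss_eq : s = s' := e.injective hseq
  refine ⟨hss_eq, ?_⟩
  rw [hss_eq] at heq
  exact hsu.mul_left_cancel heq

end AuxLemmas

section JLemmas

variable {k : Type*} [Field k] {n : ℕ}

lemma Jmat_mul_Jmat (k : Type*) [Field k] (n : ℕ) :
    Jmat k n * Jmat k n = (-1 : Matrix (Fin (2 * n)) (Fin (2 * n)) k) := by
  ext i j
  have hi := i.isLt
  have hj := j.isLt
  rw [Matrix.mul_apply]
  have hr : 2 * n - 1 - (i : ℕ) < 2 * n := by omega
  rw [Finset.sum_eq_single (⟨2 * n - 1 - (i : ℕ), hr⟩ : Fin (2 * n))]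
  · simp only [Jmat, Matrix.of_apply, Matrix.neg_apply, Matrix.one_apply]
    rw [if_pos (show (i : ℕ) + (2 * n - 1 - (i : ℕ)) = 2 * n - 1 by omega)]
    by_cases hji : j = i
    · subst hji
      rw [if_pos (show (2 * n - 1 - (j : ℕ)) + (j : ℕ) = 2 * n - 1 by omega), if_pos rfl]
      by_cases hn : (j : ℕ) < n
      · rw [if_pos hn, if_neg (show ¬ (2 * n - 1 - (j : ℕ) : ℕ) < n by omega)]
        ring
      · rw [if_neg hn, if_pos (show (2 * n - 1 - (j : ℕ) : ℕ) < n by omega)]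
        ring
    · rw [if_neg (show ¬ (2 * n - 1 - (i : ℕ)) + (j : ℕ) = 2 * n - 1 by
          intro h; exact hji (Fin.ext (show (j : ℕ) = (i : ℕ) by omega))), mul_zero,
        if_neg (show ¬ i = j from fun hh => hji hh.symm)]
      simp
  · intro b _ hb
    have : ¬ ((i : ℕ) + (b : ℕ) = 2 * n - 1) := by
      intro h; exact hb (Fin.ext (show (b : ℕ) = 2 * n - 1 - (i : ℕ) by omega))
    simp only [Jmat, Matrix.of_apply]
    rw [if_neg this, zero_mul]
  · intro h; exact absurd (Finset.mem_univ _) h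

lemma Jmat_mul_neg (k : Type*) [Field k] (n : ℕ) :
    Jmat k n * (-(Jmat k n)) = 1 := by
  rw [mul_neg, Jmat_mul_Jmat, neg_neg]

lemma Jmat_inv (k : Type*) [Field k] (n : ℕ) : (Jmat k n)⁻¹ = -(Jmat k n) :=
  Matrix.inv_eq_right_inv (Jmat_mul_neg k n)

lemma Jmat_mul_inv (k : Type*) [Field k] (n : ℕ) : Jmat k n * (Jmat k n)⁻¹ = 1 := by
  rw [Jmat_inv]; exact Jmat_mul_neg k n

lemma Jmat_inv_mul (k : Type*) [Field k] (n : ℕ) : (Jmat k n)⁻¹ * Jmat k n = 1 := by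
  rw [Jmat_inv, neg_mul, Jmat_mul_Jmat, neg_neg]

lemma thetaMap_mul (k : Type*) [Field k] (n : ℕ)
    (a b : Matrix (Fin (2 * n)) (Fin (2 * n)) k) :
    thetaMap k n (a * b) = thetaMap k n a * thetaMap k n b := by
  unfold thetaMap
  rw [Matrix.mul_inv_rev, Matrix.transpose_mul]
  simp only [Matrix.mul_assoc]
  congr 2
  rw [← Matrix.mul_assoc (Jmat k n)⁻¹ (Jmat k n), Jmat_inv_mul, Matrix.one_mul]

lemma thetaMap_one (k : Type*) [Field k] (n : ℕ) : thetaMap k n 1 = 1 := by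
  unfold thetaMap
  rw [show ((1 : Matrix (Fin (2 * n)) (Fin (2 * n)) k))⁻¹ = 1 from
      Matrix.inv_eq_right_inv (by rw [one_mul]),
    Matrix.transpose_one, Matrix.mul_one, Jmat_mul_inv]

lemma thetaMap_isUnit {k : Type*} [Field k] {n : ℕ}
    {a : Matrix (Fin (2 * n)) (Fin (2 * n)) k} (h : IsUnit a) :
    IsUnit (thetaMap k n a) := by
  obtain ⟨u, rfl⟩ := h
  refine ⟨⟨thetaMap k n u, thetaMap k n ↑u⁻¹, ?_, ?_⟩, rfl⟩
  · rw [← thetaMap_mul, Units.mul_inv, thetaMap_one]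
  · rw [← thetaMap_mul, Units.inv_mul, thetaMap_one]

end JLemmas

section MatrixUnits

variable {K : Type*} [CommRing K] {m : Type*} [Fintype m] [DecidableEq m]

lemma unit_mul_inv {A : Matrix m m K} (h : IsUnit A) : A * A⁻¹ = 1 :=
  Matrix.mul_nonsing_inv A ((Matrix.isUnit_iff_isUnit_det A).mp h)

lemma unit_inv_mul {A : Matrix m m K} (h : IsUnit A) : A⁻¹ * A = 1 :=
  Matrix.nonsing_inv_mul A ((Matrix.isUnit_iff_isUnit_det A).mp h)

lemma isUnit_nonsing_inv' {A : Matrix m m K} (h : IsUnit A) : IsUnit A⁻¹ :=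
  ⟨⟨A⁻¹, A, unit_inv_mul h, unit_mul_inv h⟩, rfl⟩

lemma commute_nonsing_inv {A B : Matrix m m K} (h : IsUnit A) (hc : A * B = B * A) :
    A⁻¹ * B = B * A⁻¹ := by
  have h1 := unit_inv_mul h
  have h2 := unit_mul_inv h
  calc A⁻¹ * B = A⁻¹ * B * (A * A⁻¹) := by rw [h2, mul_one]
    _ = A⁻¹ * (B * A) * A⁻¹ := by noncomm_ring
    _ = A⁻¹ * (A * B) * A⁻¹ := by rw [hc]
    _ = (A⁻¹ * A) * B * A⁻¹ := by noncomm_ring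
    _ = B * A⁻¹ := by rw [h1, one_mul]

lemma commute_of_commute_inv {A B : Matrix m m K} (h : IsUnit A)
    (hc : B * A⁻¹ = A⁻¹ * B) : B * A = A * B := by
  have h1 := unit_inv_mul h
  have h2 := unit_mul_inv h
  calc B * A = (A * A⁻¹) * B * A := by rw [h2, one_mul]
    _ = A * (A⁻¹ * B) * A := by noncomm_ring
    _ = A * (B * A⁻¹) * A := by rw [hc]
    _ = A * B * (A⁻¹ * A) := by noncomm_ring
    _ = A * B := by rw [h1, mul_one]

lemma units_conj_inv (g : (Matrix m m K)ˣ) (A : Matrix m m K) :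
    ((g : Matrix m m K) * A * (↑g⁻¹ : Matrix m m K))⁻¹
      = (g : Matrix m m K) * A⁻¹ * (↑g⁻¹ : Matrix m m K) := by
  rw [Matrix.mul_inv_rev, Matrix.mul_inv_rev]
  rw [← Matrix.coe_units_inv g, ← Matrix.coe_units_inv g⁻¹, inv_inv, mul_assoc]

/-- The transpose of a unit matrix, as a unit. -/
def transposeUnit (g : (Matrix m m K)ˣ) : (Matrix m m K)ˣ where
  val := (g : Matrix m m K)ᵀ
  inv := (↑g⁻¹ : Matrix m m K)ᵀ
  val_inv := by rw [← Matrix.transpose_mul, Units.inv_mul, Matrix.transpose_one]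
  inv_val := by rw [← Matrix.transpose_mul, Units.mul_inv, Matrix.transpose_one]

lemma isNilpotent_transpose {A : Matrix m m K} (h : IsNilpotent A) : IsNilpotent Aᵀ := by
  obtain ⟨r, hr⟩ := h
  exact ⟨r, by rw [← Matrix.transpose_pow, hr, Matrix.transpose_zero]⟩

lemma isNilpotent_units_conj (g : (Matrix m m K)ˣ) {A : Matrix m m K}
    (h : IsNilpotent A) :
    IsNilpotent ((g : Matrix m m K) * A * (↑g⁻¹ : Matrix m m K)) := by
  obtain ⟨r, hr⟩ := h
  exact ⟨r, by rw [Units.conj_pow, hr, mul_zero, zero_mul]⟩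

end MatrixUnits

/-- For `x ∈ G^{ιθ}` with Jordan decomposition `x = x_s x_u`: both `x_s` and `x_u` lie in
`G^{ιθ}`, the Levi subgroup `L₀ = Z_G(x_s)` is θ-stable, `x_s ∈ Z(L₀)^{ιθ}`, and
`x_u ∈ (L₀)^{ιθ}_{uni}`. -/
theorem jordan_parts_in_Giota
    (k : Type) [Field k] [IsAlgClosed k] (hchar : ringChar k ≠ 2) (n : ℕ)
    (x xs xu : Matrix (Fin (2 * n)) (Fin (2 * n)) k)
    (hx : x ∈ Giota k n)
    (hdec : x = xs * xu) (hcomm : xs * xu = xu * xs)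
    (hss : ∃ g : (Matrix (Fin (2 * n)) (Fin (2 * n)) k)ˣ,
      ∃ d : Matrix (Fin (2 * n)) (Fin (2 * n)) k, (∀ i j, i ≠ j → d i j = 0) ∧
        xs = (g : Matrix (Fin (2 * n)) (Fin (2 * n)) k) * d *
          (↑g⁻¹ : Matrix (Fin (2 * n)) (Fin (2 * n)) k))
    (hun : IsNilpotent (xu - 1)) (hxs : IsUnit xs) :
    xs ∈ Giota k n ∧
    xu ∈ Giota k n ∧
    -- `L₀ = Z_G(x_s)` is θ-stable
    (∀ g ∈ Lzero k n xs, thetaMap k n g ∈ Lzero k n xs) ∧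
    -- `x_s ∈ Z(L₀)^{ιθ}`
    (xs ∈ Lzero k n xs ∧ ∀ g ∈ Lzero k n xs, xs * g = g * xs) ∧
    -- `x_u ∈ (L₀)^{ιθ}_{uni}`
    (xu ∈ Lzero k n xs ∧ IsNilpotent (xu - 1)) := by
  obtain ⟨g, d, hdiag, hxseq⟩ := hss
  have hd : d = Matrix.diagonal (fun i => d i i) := by
    ext i j
    rcases eq_or_ne i j with rfl | hij
    · rw [Matrix.diagonal_apply_eq]
    · rw [Matrix.diagonal_apply_ne _ hij]; exact hdiag i j hij
  set v : Fin (2 * n) → k := fun i => d i i with hv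
  rw [hd] at hxseq
  -- `xu` is a unit
  have hxu : IsUnit xu := by
    have := hun.isUnit_add_one
    rwa [sub_add_cancel] at this
  -- the unit `J`
  set Ju : (Matrix (Fin (2 * n)) (Fin (2 * n)) k)ˣ :=
    ⟨Jmat k n, -(Jmat k n), Jmat_mul_neg k n,
      by rw [neg_mul, Jmat_mul_Jmat, neg_neg]⟩ with hJu
  -- inverse of `xs`
  have hxs_inv : xs⁻¹ = (g : Matrix (Fin (2 * n)) (Fin (2 * n)) k) *
      (Matrix.diagonal v)⁻¹ * (↑g⁻¹ : Matrix (Fin (2 * n)) (Fin (2 * n)) k) := by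
    rw [hxseq, units_conj_inv]
  -- `θ(xs)` is conjugate to a diagonal matrix
  have hθxs_form : ∃ (h : (Matrix (Fin (2 * n)) (Fin (2 * n)) k)ˣ)
      (w : Fin (2 * n) → k), thetaMap k n xs = (h : Matrix (Fin (2 * n)) (Fin (2 * n)) k) *
        Matrix.diagonal w * (↑h⁻¹ : Matrix (Fin (2 * n)) (Fin (2 * n)) k) := by
    refine ⟨⟨Jmat k n * (↑g⁻¹ : Matrix (Fin (2 * n)) (Fin (2 * n)) k)ᵀ,
      (↑g : Matrix (Fin (2 * n)) (Fin (2 * n)) k)ᵀ * (Jmat k n)⁻¹, ?_, ?_⟩,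
      Ring.inverse v, ?_⟩
    · calc (Jmat k n * (↑g⁻¹ : Matrix (Fin (2 * n)) (Fin (2 * n)) k)ᵀ) *
            ((↑g : Matrix (Fin (2 * n)) (Fin (2 * n)) k)ᵀ * (Jmat k n)⁻¹)
          = Jmat k n * ((↑g : Matrix (Fin (2 * n)) (Fin (2 * n)) k) *
              (↑g⁻¹ : Matrix (Fin (2 * n)) (Fin (2 * n)) k))ᵀ * (Jmat k n)⁻¹ := by
            rw [Matrix.transpose_mul]; noncomm_ring
        _ = 1 := by rw [Units.mul_inv, Matrix.transpose_one, Matrix.mul_one, Jmat_mul_inv]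
    · calc ((↑g : Matrix (Fin (2 * n)) (Fin (2 * n)) k)ᵀ * (Jmat k n)⁻¹) *
            (Jmat k n * (↑g⁻¹ : Matrix (Fin (2 * n)) (Fin (2 * n)) k)ᵀ)
          = (↑g : Matrix (Fin (2 * n)) (Fin (2 * n)) k)ᵀ *
              ((Jmat k n)⁻¹ * Jmat k n) *
              (↑g⁻¹ : Matrix (Fin (2 * n)) (Fin (2 * n)) k)ᵀ := by noncomm_ring
        _ = ((↑g⁻¹ : Matrix (Fin (2 * n)) (Fin (2 * n)) k) *
              (↑g : Matrix (Fin (2 * n)) (Fin (2 * n)) k))ᵀ := by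
            rw [Jmat_inv_mul, Matrix.mul_one, Matrix.transpose_mul]
        _ = 1 := by rw [Units.inv_mul, Matrix.transpose_one]
    · show Jmat k n * (xs⁻¹)ᵀ * (Jmat k n)⁻¹ = _
      rw [hxs_inv, Matrix.inv_diagonal, Matrix.transpose_mul, Matrix.transpose_mul,
        Matrix.diagonal_transpose]
      noncomm_ring
  -- `xs⁻¹` is conjugate to a diagonal matrix
  have hxs_inv_form : ∃ (h : (Matrix (Fin (2 * n)) (Fin (2 * n)) k)ˣ)
      (w : Fin (2 * n) → k), xs⁻¹ = (h : Matrix (Fin (2 * n)) (Fin (2 * n)) k) *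
        Matrix.diagonal w * (↑h⁻¹ : Matrix (Fin (2 * n)) (Fin (2 * n)) k) :=
    ⟨g, Ring.inverse v, by rw [hxs_inv, Matrix.inv_diagonal]⟩
  -- `xu⁻¹` is unipotent
  have hinv_nil : IsNilpotent (xu⁻¹ - 1) := by
    have hc : Commute xu⁻¹ (xu - 1) := by
      show xu⁻¹ * (xu - 1) = (xu - 1) * xu⁻¹
      apply commute_nonsing_inv hxu
      show xu * (xu - 1) = (xu - 1) * xu
      noncomm_ring
    have e : xu⁻¹ - 1 = -(xu⁻¹ * (xu - 1)) := by
      rw [mul_sub, mul_one, unit_inv_mul hxu, neg_sub]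
    rw [e]
    exact (hc.isNilpotent_mul_left hun).neg
  -- `θ(xu)` is unipotent
  have hθxu_nil : IsNilpotent (thetaMap k n xu - 1) := by
    have h1 : thetaMap k n xu - 1
        = Jmat k n * ((xu⁻¹)ᵀ - 1) * (Jmat k n)⁻¹ := by
      show Jmat k n * (xu⁻¹)ᵀ * (Jmat k n)⁻¹ - 1 = _
      rw [mul_sub, sub_mul, mul_one, Jmat_mul_inv]
    have h2 : IsNilpotent ((xu⁻¹)ᵀ - 1) := by
      have := isNilpotent_transpose hinv_nil
      rwa [Matrix.transpose_sub, Matrix.transpose_one] at this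
    rw [h1, Jmat_inv]
    exact isNilpotent_units_conj Ju h2
  -- the key identity from `x ∈ G^{ιθ}`
  have hxinv : thetaMap k n xs * thetaMap k n xu = xs⁻¹ * xu⁻¹ := by
    rw [← thetaMap_mul, ← hdec, hx.2, hdec, hcomm, Matrix.mul_inv_rev]
  have hcθ : thetaMap k n xs * thetaMap k n xu = thetaMap k n xu * thetaMap k n xs := by
    rw [← thetaMap_mul, ← thetaMap_mul, hcomm]
  have hcinv : xs⁻¹ * xu⁻¹ = xu⁻¹ * xs⁻¹ := by
    rw [← Matrix.mul_inv_rev, ← Matrix.mul_inv_rev, hcomm]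
  -- uniqueness of the Jordan decomposition
  obtain ⟨hθs_eq, hθu_eq⟩ := mult_jordan_unique' hθxs_form hxs_inv_form
    hθxu_nil hinv_nil hcθ hcinv hxinv (isUnit_nonsing_inv' hxs)
  refine ⟨⟨hxs, hθs_eq⟩, ⟨hxu, hθu_eq⟩, ?_, ⟨⟨hxs, rfl⟩, ?_⟩, ⟨hxu, hcomm.symm⟩, hun⟩
  · rintro a ⟨hau, hac⟩
    refine ⟨thetaMap_isUnit hau, ?_⟩
    have h1 : thetaMap k n a * thetaMap k n xs = thetaMap k n xs * thetaMap k n a := by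
      rw [← thetaMap_mul, ← thetaMap_mul, hac]
    rw [hθs_eq] at h1
    exact commute_of_commute_inv hxs h1
  · rintro a ⟨-, hac⟩
    exact hac.symm
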